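/- arXiv:2403.00412 — 6 statements merged into one kernel-verified Lean document; each statement's English description precedes it below -/
import Mathlib

section
/- Let H_1, ..., H_{d+1} be d+1 oriented hyperplanes in general position in R^d (i.e., every d of them meet in exactly one point and no point lies on d+1 of them). If the intersection of the open negative halfspaces ∩_{i=1}^{d+1} H_i^- is nonempty and bounded, then the intersection of the open positive halfspaces ∩_{i=1}^{d+1} H_i^+ is empty. -/
open Set

/-- If `d+1` oriented hyperplanes in `ℝ^d` are in general position
(any `d` of them meet in exactly one point, no point lies on all `d+1`) and the
intersection of their open negative halfspaces is nonempty and bounded, then the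
intersection of the open positive halfspaces is empty. -/
theorem stmt0 (d : ℕ) (hd : 0 < d)
    (f : Fin (d + 1) → (Fin d → ℝ) →ₗ[ℝ] ℝ) (c : Fin (d + 1) → ℝ)
    (hf : ∀ i, f i ≠ 0)
    (hgen : ∀ i : Fin (d + 1), ∃! x : Fin d → ℝ, ∀ j, j ≠ i → f j x = c j)
    (hgen' : ¬ ∃ x : Fin d → ℝ, ∀ i, f i x = c i)
    (hne : (⋂ i, {x : Fin d → ℝ | f i x < c i}).Nonempty)
    (hbd : Bornology.IsBounded (⋂ i, {x : Fin d → ℝ | f i x < c i})) :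
    (⋂ i, {x : Fin d → ℝ | c i < f i x}) = ∅ := by
  by_contra h
  rw [← Ne, ← nonempty_iff_ne_empty] at h
  obtain ⟨q, hq⟩ := h
  obtain ⟨p, hp⟩ := hne
  simp only [mem_iInter, mem_setOf_eq] at hp hq
  set v := p - q with hv
  have hfv : ∀ i, f i v < 0 := by
    intro i
    have h1 := hp i
    have h2 := hq i
    have : f i v = f i p - f i q := by rw [hv, map_sub]
    linarith
  have hvnorm : 0 < ‖v‖ := by
    rw [norm_pos_iff]
    intro h0
    have := hfv 0
    rw [h0, map_zero] at this
    exact lt_irrefl 0 this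
  have hray : ∀ t : ℝ, 0 ≤ t → p + t • v ∈ ⋂ i, {x : Fin d → ℝ | f i x < c i} := by
    intro t ht
    simp only [mem_iInter, mem_setOf_eq]
    intro i
    have h1 := hp i
    have h2 := hfv i
    have heq : f i (p + t • v) = f i p + t * f i v := by
      rw [map_add, map_smul]; rfl
    rw [heq]
    nlinarith
  obtain ⟨C, hC⟩ := Bornology.IsBounded.exists_norm_le hbd
  have hCp : ‖p‖ ≤ C := hC p (by simpa using hray 0 le_rfl)
  set t : ℝ := (C + ‖p‖ + 1) / ‖v‖ with htdef
  have ht : 0 ≤ t := div_nonneg (by linarith [norm_nonneg p]) hvnorm.le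
  have hmem := hC _ (hray t ht)
  have h1 : ‖t • v‖ ≤ ‖p + t • v‖ + ‖p‖ := by
    have heq : (p + t • v) - p = t • v := by abel
    calc ‖t • v‖ = ‖(p + t • v) - p‖ := by rw [heq]
    _ ≤ ‖p + t • v‖ + ‖p‖ := norm_sub_le _ _
  have h2 : ‖t • v‖ = t * ‖v‖ := by
    rw [norm_smul, Real.norm_of_nonneg ht]
  have h3 : t * ‖v‖ = C + ‖p‖ + 1 := by
    rw [htdef, div_mul_cancel₀ _ (ne_of_gt hvnorm)]
  linarith
end

section
/- Let H_1, ..., H_{d+1} be d+1 oriented hyperplanes in general position in R^d. If the intersection of the open negative halfspaces ∩_{i=1}^{d+1} H_i^- is empty, then the intersection of the open positive halfspaces ∩_{i=1}^{d+1} H_i^+ is nonempty and bounded. -/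
/-!
The `d + 1` functionals `f i` live in the `d`-dimensional dual, so `∑ L i • f i = 0` for some
`L ≠ 0`. General position makes every `d` of them independent, hence all `L i ≠ 0`, and makes
`x ↦ (f i x)ᵢ` map onto the hyperplane `∑ L i * y i = 0`; since the `d + 1` hyperplanes have no
common point, `s := ∑ L i * c i ≠ 0`. The affine hyperplane `∑ L i * w i = s` meets the open
positive orthant as soon as some `L i * s > 0`; applied to `w = c - f x`, emptiness of the negative
cell forces `L i * s < 0` for all `i`. Then `f x - c` ranges over the positive solutions of
`∑ L i * y i = -s`, a nonempty set on which `y i ≤ -s / L i`, and `x ↦ (f i x)ᵢ` is injective,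
hence antilipschitz.
-/

open Set Function Module Filter Topology

namespace LinearMap

variable {κ E : Type*} [AddCommGroup E] [Module ℝ E]

theorem pi_injective_of_existsUnique {g : κ → E →ₗ[ℝ] ℝ} {c : κ → ℝ}
    (h : ∃! x, ∀ k, g k x = c k) : Injective (pi g) := by
  obtain ⟨x₀, hx₀, huniq⟩ := h
  rw [← ker_eq_bot, ker_eq_bot']
  intro v hv
  have : x₀ + v = x₀ := huniq _ fun k => by
    rw [map_add, hx₀, show g k v = 0 from congrFun hv k, add_zero]
  exact add_eq_left.mp this

theorem pi_surjective_of_existsUnique [Fintype κ] [FiniteDimensional ℝ E]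
    (hcard : Fintype.card κ = finrank ℝ E) {g : κ → E →ₗ[ℝ] ℝ} {c : κ → ℝ}
    (h : ∃! x, ∀ k, g k x = c k) : Surjective (pi g) :=
  (injective_iff_surjective_of_finrank_eq_finrank (by simp [hcard])).mp
    (pi_injective_of_existsUnique h)

theorem linearIndependent_of_pi_surjective [Fintype κ] {g : κ → E →ₗ[ℝ] ℝ}
    (h : Surjective (pi g)) : LinearIndependent ℝ g := by
  classical
  refine Fintype.linearIndependent_iff.mpr fun L hL k => ?_
  obtain ⟨x, hx⟩ := h (Pi.single k 1)
  have hgx (j : κ) : g j x = (Pi.single k 1 : κ → ℝ) j := congrFun hx j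
  simpa [hgx, Pi.single_apply] using congrArg (· x) hL

end LinearMap

section Relation

variable {ι M : Type*} [Fintype ι] [AddCommGroup M] [Module ℝ M]

theorem exists_sum_smul_eq_zero_of_finrank_lt_card [FiniteDimensional ℝ M] {v : ι → M}
    (h : finrank ℝ M < Fintype.card ι) : ∃ L : ι → ℝ, ∑ i, L i • v i = 0 ∧ L ≠ 0 := by
  have hdep : ¬ LinearIndependent ℝ v := fun hv => h.not_ge hv.fintype_card_le_finrank
  obtain ⟨L, hrel, i, hi⟩ := Fintype.not_linearIndependent_iff.mp hdep
  exact ⟨L, hrel, fun h => hi (congrFun h i)⟩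

theorem forall_ne_zero_of_sum_smul_eq_zero {v : ι → M} {L : ι → ℝ}
    (hrel : ∑ i, L i • v i = 0) (hL : L ≠ 0)
    (hind : ∀ i, LinearIndependent ℝ fun j : {j // j ≠ i} => v j.1) (i : ι) : L i ≠ 0 := by
  classical
  intro hi
  rw [Fintype.sum_eq_add_sum_subtype_ne _ i, hi, zero_smul, zero_add] at hrel
  have hrest := Fintype.linearIndependent_iff.mp (hind i) (fun j => L j) hrel
  exact hL (funext fun j => if hj : j = i then hj ▸ hi else hrest ⟨j, hj⟩)

end Relation

section Orthant

variable {ι : Type*} [Fintype ι]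

theorem exists_pos_sum_mul_eq {L : ι → ℝ} {s : ℝ} {j : ι} (hj : 0 < L j * s) :
    ∃ w : ι → ℝ, (∀ i, 0 < w i) ∧ ∑ i, L i * w i = s := by
  classical
  set A := ∑ i, L i
  have hLj : L j ≠ 0 := left_ne_zero_of_mul hj.ne'
  have hpos : 0 < (s - 0 * A) / L j := by
    rw [zero_mul, sub_zero, show s / L j = L j * s / L j ^ 2 by field_simp]
    positivity
  -- `w = ε + λ(ε) • e_j` with `λ(ε) = (s - ε * A) / L j`, which stays positive for small `ε > 0`
  have hev : ∀ᶠ ε in 𝓝[>] (0 : ℝ), 0 < ε ∧ 0 < (s - ε * A) / L j :=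
    Filter.Eventually.and self_mem_nhdsWithin <| nhdsWithin_le_nhds <|
      (continuousAt_id.mul continuousAt_const |>.const_sub s |>.div_const (L j)).eventually_const_lt
        hpos
  obtain ⟨ε, hε, hw⟩ := hev.exists
  refine ⟨fun i => ε + if i = j then (s - ε * A) / L j else 0, fun i => ?_, ?_⟩
  · dsimp only
    split_ifs <;> linarith
  · simp [mul_add, Finset.sum_add_distrib, ← Finset.sum_mul, A]
    field_simp
    ring

theorem le_div_of_sum_mul_eq {L y : ι → ℝ} {t : ℝ} (hL : ∀ i, 0 < L i * t)
    (hy : ∀ i, 0 ≤ y i) (hsum : ∑ i, L i * y i = t) (i : ι) : y i ≤ t / L i := by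
  have hterm : L i * t * y i ≤ t * t :=
    calc L i * t * y i ≤ ∑ j, L j * t * y j :=
          Finset.single_le_sum (fun j _ => mul_nonneg (hL j).le (hy j)) (Finset.mem_univ i)
      _ = t * t := by simp_rw [mul_right_comm _ t]; rw [← Finset.sum_mul, hsum]
  have ht : t ≠ 0 := right_ne_zero_of_mul (hL i).ne'
  calc y i = L i * t * y i / (L i * t) := (mul_div_cancel_left₀ _ (hL i).ne').symm
    _ ≤ t * t / (L i * t) := div_le_div_of_nonneg_right hterm (hL i).le
    _ = t / L i := by field_simp

end Orthant

section Hyperplanes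

variable {ι E : Type*} [Fintype ι] [AddCommGroup E] [Module ℝ E] {f : ι → E →ₗ[ℝ] ℝ}
  {c L : ι → ℝ}

theorem sum_mul_apply_eq_zero (hrel : ∑ i, L i • f i = 0) (x : E) : ∑ i, L i * f i x = 0 := by
  simpa using congrArg (· x) hrel

theorem exists_forall_apply_eq_of_sum_mul_eq_zero (hrel : ∑ i, L i • f i = 0) {i : ι}
    (hi : L i ≠ 0) (hsurj : Surjective (LinearMap.pi fun j : {j // j ≠ i} => f j.1))
    {y : ι → ℝ} (hy : ∑ j, L j * y j = 0) : ∃ x, ∀ j, f j x = y j := by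
  classical
  obtain ⟨x, hx⟩ := hsurj fun j => y j
  have hxj (j : {j // j ≠ i}) : f j x = y j := congrFun hx j
  have hsum := sum_mul_apply_eq_zero hrel x
  refine ⟨x, fun j => if hj : j = i then ?_ else hxj ⟨j, hj⟩⟩
  subst hj
  rw [Fintype.sum_eq_add_sum_subtype_ne _ j] at hsum hy
  simp only [hxj] at hsum
  exact mul_left_cancel₀ hi (by linarith)

theorem not_pos_mul_sum_of_iInter_lt_eq_empty
    (hrange : ∀ y : ι → ℝ, ∑ i, L i * y i = 0 → ∃ x, ∀ i, f i x = y i)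
    (hempty : (⋂ i, {x | f i x < c i}) = ∅) (i : ι) : ¬ 0 < L i * ∑ j, L j * c j := by
  intro h
  obtain ⟨w, hw, hsum⟩ := exists_pos_sum_mul_eq h
  obtain ⟨x, hx⟩ := hrange (c - w) (by simp [mul_sub, Finset.sum_sub_distrib, hsum])
  have hmem : x ∈ ⋂ i, {x | f i x < c i} := mem_iInter.mpr fun i => by simp [hx, hw i]
  rwa [hempty] at hmem

theorem nonempty_iInter_lt_of_pos_mul
    (hrange : ∀ y : ι → ℝ, ∑ i, L i * y i = 0 → ∃ x, ∀ i, f i x = y i) {i : ι}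
    (hi : 0 < L i * -∑ j, L j * c j) : (⋂ i, {x | c i < f i x}).Nonempty := by
  obtain ⟨y, hy, hsum⟩ := exists_pos_sum_mul_eq hi
  obtain ⟨x, hx⟩ := hrange (c + y) (by simp [mul_add, Finset.sum_add_distrib, hsum])
  exact ⟨x, mem_iInter.mpr fun i => by simp [hx, hy i]⟩

theorem iInter_lt_subset_preimage_Icc (hrel : ∑ i, L i • f i = 0)
    (hsign : ∀ i, 0 < L i * -∑ j, L j * c j) :
    (⋂ i, {x | c i < f i x}) ⊆
      LinearMap.pi f ⁻¹' Icc c (c + fun i => -(∑ j, L j * c j) / L i) := by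
  intro x hx
  simp only [mem_iInter] at hx
  have hbound := le_div_of_sum_mul_eq hsign (y := fun i => f i x - c i)
    (fun i => (sub_pos.mpr (hx i)).le)
    (by simp [mul_sub, Finset.sum_sub_distrib, sum_mul_apply_eq_zero hrel x])
  exact ⟨fun i => (hx i).le, fun i => by simp; linarith [hbound i]⟩

end Hyperplanes

theorem stmt1_general (d : ℕ)
    (f : Fin (d + 1) → (Fin d → ℝ) →ₗ[ℝ] ℝ) (c : Fin (d + 1) → ℝ)
    (hgen : ∀ i : Fin (d + 1), ∃! x : Fin d → ℝ, ∀ j, j ≠ i → f j x = c j)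
    (hgen' : ¬ ∃ x : Fin d → ℝ, ∀ i, f i x = c i)
    (hempty : (⋂ i, {x : Fin d → ℝ | f i x < c i}) = ∅) :
    (⋂ i, {x : Fin d → ℝ | c i < f i x}).Nonempty ∧
      Bornology.IsBounded (⋂ i, {x : Fin d → ℝ | c i < f i x}) := by
  have huniq (i : Fin (d + 1)) : ∃! x, ∀ j : {j // j ≠ i}, f j x = c j := by
    simpa only [Subtype.forall] using hgen i
  have hsurj (i : Fin (d + 1)) : Surjective (LinearMap.pi fun j : {j // j ≠ i} => f j) :=
    LinearMap.pi_surjective_of_existsUnique (by simp [Fintype.card_subtype_compl]) (huniq i)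
  obtain ⟨L, hrel, hL⟩ := exists_sum_smul_eq_zero_of_finrank_lt_card (v := f) (by simp)
  have hLne := forall_ne_zero_of_sum_smul_eq_zero hrel hL fun i =>
    LinearMap.linearIndependent_of_pi_surjective (hsurj i)
  have hrange (y : Fin (d + 1) → ℝ) (hy : ∑ i, L i * y i = 0) : ∃ x, ∀ i, f i x = y i :=
    exists_forall_apply_eq_of_sum_mul_eq_zero hrel (hLne 0) (hsurj 0) hy
  have hs : ∑ i, L i * c i ≠ 0 := fun hs => hgen' (hrange c hs)
  have hsign (i : Fin (d + 1)) : 0 < L i * -∑ j, L j * c j := by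
    rw [mul_neg, neg_pos]
    exact (not_lt.mp (not_pos_mul_sum_of_iInter_lt_eq_empty hrange hempty i)).lt_of_ne
      (mul_ne_zero (hLne i) hs)
  have hinj : Injective (LinearMap.pi f) := fun x y hxy =>
    LinearMap.pi_injective_of_existsUnique (huniq 0) (funext fun j => congrFun hxy j)
  obtain ⟨K, -, hK⟩ := (LinearMap.pi f).exists_antilipschitzWith (LinearMap.ker_eq_bot.mpr hinj)
  exact ⟨nonempty_iInter_lt_of_pos_mul hrange (hsign 0),
    (hK.isBounded_preimage (Metric.isBounded_Icc _ _)).subset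
      (iInter_lt_subset_preimage_Icc hrel hsign)⟩

/-- If `d+1` oriented hyperplanes in `ℝ^d` are in general position
and the intersection of the open negative halfspaces is empty, then the
intersection of the open positive halfspaces is nonempty and bounded. -/
theorem stmt1 (d : ℕ) (hd : 0 < d)
    (f : Fin (d + 1) → (Fin d → ℝ) →ₗ[ℝ] ℝ) (c : Fin (d + 1) → ℝ)
    (hf : ∀ i, f i ≠ 0)
    (hgen : ∀ i : Fin (d + 1), ∃! x : Fin d → ℝ, ∀ j, j ≠ i → f j x = c j)
    (hgen' : ¬ ∃ x : Fin d → ℝ, ∀ i, f i x = c i)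
    (hempty : (⋂ i, {x : Fin d → ℝ | f i x < c i}) = ∅) :
    (⋂ i, {x : Fin d → ℝ | c i < f i x}).Nonempty ∧
      Bornology.IsBounded (⋂ i, {x : Fin d → ℝ | c i < f i x}) :=
  stmt1_general d f c hgen hgen' hempty
end

section
/- Let x_1, ..., x_{d+1} be points in R^d and G_1, ..., G_{d+1} oriented hyperplanes such that Δ = ∩_{i=1}^{d+1} G_i^- is a nonempty bounded open set (an open d-simplex), and for each i the point x_i lies in the closure of the cone ∩_{j ≠ i} G_j^+. Then Δ is contained in the convex hull of {x_1, ..., x_{d+1}}. -/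
/-!
Boundedness of the nonempty set `Δ` means that no `v ≠ 0` has `f i v ≤ 0` for all `i`. Hence
`Φ = (f i)ᵢ` embeds `ℝᵈ` as a hyperplane of `ℝᵈ⁺¹` meeting the nonpositive orthant only in `0`,
and such a hyperplane is the kernel of a strictly positive weight vector `w`, i.e.
`∑ wᵢ fᵢ = 0`. Shifting coefficients along `w`, every linear `g` is `∑ νᵢ fᵢ` with `ν ≥ 0` and
some `ν_k = 0`. For `y ∈ Δ` this gives `g y ≤ ∑ νᵢ cᵢ ≤ g (x k)`, since `fᵢ (x k) ≥ cᵢ` for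
`i ≠ k`; so no functional separates `y` from the points `x i`, and Hahn–Banach puts `y` in
their convex hull.
-/

open Set Module

section Recession

variable {E : Type*} [NormedAddCommGroup E] [NormedSpace ℝ E]

theorem eq_zero_of_isBounded_of_forall_add_smul_mem {s : Set E} (hs : Bornology.IsBounded s)
    {y v : E} (hv : ∀ t : ℝ, 0 ≤ t → y + t • v ∈ s) : v = 0 := by
  obtain ⟨C, hC⟩ := isBounded_iff_forall_norm_le.1 hs
  have hy : ‖y‖ ≤ C := by simpa using hC _ (hv 0 le_rfl)
  by_contra hv0
  have hvpos : 0 < ‖v‖ := norm_pos_iff.2 hv0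
  set t := (2 * C + 1) / ‖v‖
  have ht : 0 ≤ t := div_nonneg (by linarith [norm_nonneg y]) hvpos.le
  have htv : ‖t • v‖ = 2 * C + 1 := by
    rw [norm_smul, Real.norm_of_nonneg ht, div_mul_cancel₀ _ hvpos.ne']
  have := calc ‖t • v‖ = ‖(y + t • v) - y‖ := by rw [add_sub_cancel_left]
    _ ≤ ‖y + t • v‖ + ‖y‖ := norm_sub_le _ _
    _ ≤ C + C := add_le_add (hC _ (hv t ht)) hy
  linarith

theorem eq_zero_of_forall_apply_nonpos {ι : Type*} (f : ι → E →ₗ[ℝ] ℝ) (c : ι → ℝ)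
    (hne : (⋂ i, {y : E | f i y < c i}).Nonempty)
    (hbd : Bornology.IsBounded (⋂ i, {y : E | f i y < c i}))
    {v : E} (hv : ∀ i, f i v ≤ 0) : v = 0 := by
  obtain ⟨y, hy⟩ := hne
  refine eq_zero_of_isBounded_of_forall_add_smul_mem hbd (y := y) fun t ht =>
    mem_iInter.2 fun i => ?_
  have hyi : f i y < c i := mem_iInter.1 hy i
  have hlin : f i (y + t • v) = f i y + t * f i v := by simp
  show f i (y + t • v) < c i
  linarith [mul_nonpos_of_nonneg_of_nonpos ht (hv i)]

end Recession

section Orthant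

variable {ι : Type*} [Fintype ι]

theorem forall_pos_or_forall_neg_of_dotProduct_eq_zero {w : ι → ℝ}
    (hw : ∀ u : ι → ℝ, u ≤ 0 → w ⬝ᵥ u = 0 → u = 0) : (∀ i, 0 < w i) ∨ (∀ i, w i < 0) := by
  classical
  have hne : ∀ i, w i ≠ 0 := fun i hi => by
    have := congrFun (hw (Pi.single i (-1)) (Pi.single_nonpos.2 (by norm_num))
      (by simp [dotProduct_single, hi])) i
    simp at this
  by_contra! ⟨⟨p, hp⟩, ⟨n, hn⟩⟩
  have hp : w p < 0 := hp.lt_of_ne (hne p)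
  have hn : 0 < w n := hn.lt_of_ne' (hne n)
  have hpn : n ≠ p := by rintro rfl; linarith
  have hu := hw (Pi.single n (w p) + Pi.single p (-w n))
    (add_nonpos (Pi.single_nonpos.2 hp.le) (Pi.single_nonpos.2 (by linarith)))
    (by simp only [dotProduct_add, dotProduct_single]; ring)
  have := congrFun hu n
  simp [hpn] at this
  exact hne p this

theorem exists_pos_dotProduct_eq_zero {V : Submodule ℝ (ι → ℝ)}
    (hV : finrank ℝ V + 1 = Fintype.card ι) (hVneg : ∀ u ∈ V, u ≤ 0 → u = 0) :
    ∃ w : ι → ℝ, (∀ i, 0 < w i) ∧ ∀ u ∈ V, w ⬝ᵥ u = 0 := by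
  classical
  have hlt : V < ⊤ := lt_top_iff_ne_top.2 fun h => by
    rw [h, finrank_top, finrank_fintype_fun_eq_card] at hV
    omega
  obtain ⟨L, hL0, hLV⟩ := Submodule.exists_dual_map_eq_bot_of_lt_top hlt inferInstance
  have hker : V = LinearMap.ker L := Submodule.eq_of_le_of_finrank_eq
    (LinearMap.le_ker_iff_map.2 hLV) <| by
      have := L.finrank_ker_add_one_of_ne_zero hL0
      rw [finrank_fintype_fun_eq_card] at this
      omega
  set w := (dotProductEquiv ℝ ι).symm L
  have hLw : ∀ u, L u = w ⬝ᵥ u := fun u => by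
    rw [← dotProductEquiv_apply_apply, LinearEquiv.apply_symm_apply]
  have hw : ∀ u : ι → ℝ, u ≤ 0 → w ⬝ᵥ u = 0 → u = 0 := fun u hu hwu =>
    hVneg u (hker ▸ LinearMap.mem_ker.2 ((hLw u).trans hwu)) hu
  have hwV : ∀ u ∈ V, w ⬝ᵥ u = 0 := fun u hu => (hLw u).symm.trans (hker ▸ hu : u ∈ LinearMap.ker L)
  rcases forall_pos_or_forall_neg_of_dotProduct_eq_zero hw with hpos | hneg
  · exact ⟨w, hpos, hwV⟩
  · exact ⟨-w, fun i => neg_pos.2 (hneg i), fun u hu => by rw [neg_dotProduct, hwV u hu, neg_zero]⟩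

theorem exists_nonneg_sub_smul_eq_zero [Nonempty ι] (μ w : ι → ℝ) (hw : ∀ i, 0 < w i) :
    ∃ t : ℝ, 0 ≤ μ - t • w ∧ ∃ k, (μ - t • w) k = 0 := by
  obtain ⟨k, hk⟩ := Finite.exists_min fun i => μ i / w i
  refine ⟨μ k / w k, fun i => ?_, k, ?_⟩
  · have := (le_div_iff₀ (hw i)).1 (hk i)
    simp only [Pi.zero_apply, Pi.sub_apply, Pi.smul_apply, smul_eq_mul]
    linarith
  · simp [div_mul_cancel₀ _ (hw k).ne']

end Orthant

section Simplex

variable {E ι : Type*} [Fintype ι]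

theorem exists_nonneg_coeffs_eq_zero_of_forall_apply_nonpos [AddCommGroup E] [Module ℝ E]
    [FiniteDimensional ℝ E] (f : ι → Dual ℝ E) (hcard : Fintype.card ι = finrank ℝ E + 1)
    (hf : ∀ v, (∀ i, f i v ≤ 0) → v = 0) (g : Dual ℝ E) :
    ∃ ν : ι → ℝ, 0 ≤ ν ∧ (∃ k, ν k = 0) ∧ ∀ v, g v = ∑ i, ν i * f i v := by
  classical
  set Φ : E →ₗ[ℝ] ι → ℝ := LinearMap.pi f
  have hΦ : Function.Injective Φ := LinearMap.ker_eq_bot.1 <| LinearMap.ker_eq_bot'.2 fun v hv =>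
    hf v fun i => (congrFun hv i).le
  obtain ⟨w, hw, hwΦ⟩ := exists_pos_dotProduct_eq_zero (V := LinearMap.range Φ)
    (by rw [LinearMap.finrank_range_of_inj hΦ, hcard])
    (by rintro _ ⟨v, rfl⟩ hv; rw [hf v hv, map_zero])
  obtain ⟨h, rfl⟩ := LinearMap.dualMap_surjective_of_injective hΦ g
  have : Nonempty ι := Fintype.card_pos_iff.1 (by omega)
  obtain ⟨t, hν, k, hk⟩ := exists_nonneg_sub_smul_eq_zero ((dotProductEquiv ℝ ι).symm h) w hw
  refine ⟨_, hν, ⟨k, hk⟩, fun v => ?_⟩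
  calc h (Φ v) = (dotProductEquiv ℝ ι).symm h ⬝ᵥ Φ v - t * (w ⬝ᵥ Φ v) := by
        rw [hwΦ _ (LinearMap.mem_range_self Φ v), mul_zero, sub_zero, ← dotProductEquiv_apply_apply,
          LinearEquiv.apply_symm_apply]
    _ = ((dotProductEquiv ℝ ι).symm h - t • w) ⬝ᵥ Φ v := by
        rw [sub_dotProduct, smul_dotProduct, smul_eq_mul]
    _ = _ := rfl

theorem exists_apply_le_apply_of_mem_closure_cone [NormedAddCommGroup E] [NormedSpace ℝ E]
    [FiniteDimensional ℝ E] (f : ι → E →ₗ[ℝ] ℝ) (c : ι → ℝ) (x : ι → E)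
    (hcard : Fintype.card ι = finrank ℝ E + 1)
    (hne : (⋂ i, {y : E | f i y < c i}).Nonempty)
    (hbd : Bornology.IsBounded (⋂ i, {y : E | f i y < c i}))
    (hx : ∀ i, x i ∈ closure (⋂ j, ⋂ (_ : j ≠ i), {y : E | c j < f j y}))
    (g : E →ₗ[ℝ] ℝ) {y : E} (hy : y ∈ ⋂ i, {y : E | f i y < c i}) : ∃ k, g y ≤ g (x k) := by
  obtain ⟨ν, hν, ⟨k, hk⟩, hg⟩ := exists_nonneg_coeffs_eq_zero_of_forall_apply_nonpos f hcard
    (fun _ => eq_zero_of_forall_apply_nonpos f c hne hbd) g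
  have hxk : ∀ i ≠ k, c i ≤ f i (x k) := fun i hik =>
    closure_lt_subset_le continuous_const (f i).continuous_of_finiteDimensional <|
      closure_mono (iInter₂_subset i hik) (hx k)
  refine ⟨k, ?_⟩
  calc g y = ∑ i, ν i * f i y := hg y
    _ ≤ ∑ i, ν i * c i :=
        Finset.sum_le_sum fun i _ => mul_le_mul_of_nonneg_left (mem_iInter.1 hy i).le (hν i)
    _ ≤ ∑ i, ν i * f i (x k) := Finset.sum_le_sum fun i _ => by
        rcases eq_or_ne i k with rfl | hik
        · simp [hk]
        · exact mul_le_mul_of_nonneg_left (hxk i hik) (hν i)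
    _ = g (x k) := (hg (x k)).symm

end Simplex

theorem stmt3_general (d : ℕ) (x : Fin (d + 1) → Fin d → ℝ)
    (f : Fin (d + 1) → (Fin d → ℝ) →ₗ[ℝ] ℝ) (c : Fin (d + 1) → ℝ)
    (hne : (⋂ i, {y : Fin d → ℝ | f i y < c i}).Nonempty)
    (hbd : Bornology.IsBounded (⋂ i, {y : Fin d → ℝ | f i y < c i}))
    (hx : ∀ i, x i ∈ closure (⋂ j, ⋂ (_ : j ≠ i), {y : Fin d → ℝ | c j < f j y})) :
    (⋂ i, {y : Fin d → ℝ | f i y < c i}) ⊆ convexHull ℝ (Set.range x) := by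
  intro y hy
  by_contra hyx
  obtain ⟨g, u, hgx, hgy⟩ := geometric_hahn_banach_closed_point (convex_convexHull ℝ _)
    ((finite_range x).isCompact_convexHull ℝ).isClosed hyx
  obtain ⟨k, hk⟩ := exists_apply_le_apply_of_mem_closure_cone f c x (by simp) hne hbd hx g hy
  exact (hgx (x k) (subset_convexHull ℝ _ (mem_range_self k))).not_ge (hgy.trans_le hk).le

/-- If `Δ = ⋂ i, G_i⁻` is a nonempty bounded open set and each point
`x i` lies in the closure of the cone `⋂_{j ≠ i} G_j⁺`, then `Δ` is contained in
the convex hull of `{x 1, ..., x (d+1)}`. -/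
theorem stmt3 (d : ℕ) (x : Fin (d + 1) → Fin d → ℝ)
    (f : Fin (d + 1) → (Fin d → ℝ) →ₗ[ℝ] ℝ) (c : Fin (d + 1) → ℝ)
    (hf : ∀ i, f i ≠ 0)
    (hne : (⋂ i, {y : Fin d → ℝ | f i y < c i}).Nonempty)
    (hbd : Bornology.IsBounded (⋂ i, {y : Fin d → ℝ | f i y < c i}))
    (hx : ∀ i, x i ∈ closure (⋂ j, ⋂ (_ : j ≠ i), {y : Fin d → ℝ | c j < f j y})) :
    (⋂ i, {y : Fin d → ℝ | f i y < c i}) ⊆ convexHull ℝ (Set.range x) :=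
  stmt3_general d x f c hne hbd hx
end

section
/- Let K_1, ..., K_{d+1} be nonempty compact convex sets in R^d that form a separated family, i.e., every selection (x_1, ..., x_{d+1}) ∈ K_1 × ... × K_{d+1} has the same nonzero orientation, where the orientation of (x_1,...,x_{d+1}) is the sign of the determinant of the (d+1)×(d+1) matrix whose columns are (1, x_i). Then no hyperplane in R^d intersects all d+1 of the sets K_i. -/
open Set

/-- The orientation determinant of a `(d+1)`-tuple of points in `ℝ^d`: the
determinant of the `(d+1) × (d+1)` matrix whose `j`-th column is `(1, x j)`. -/
noncomputable def orientDet (d : ℕ) (x : Fin (d + 1) → Fin d → ℝ) : ℝ :=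
  (Matrix.of fun i j => Fin.cons (1 : ℝ) (x j) i).det

/-- if nonempty compact convex sets `K_1, ..., K_{d+1}` in `ℝ^d`
form a separated family (all colorful selections have the same nonzero
orientation), then no hyperplane intersects all `d+1` of them. -/
theorem stmt6 (d : ℕ) (K : Fin (d + 1) → Set (Fin d → ℝ))
    (hKne : ∀ i, (K i).Nonempty) (hKcp : ∀ i, IsCompact (K i))
    (hKcv : ∀ i, Convex ℝ (K i))
    (hsep : (∀ x : Fin (d + 1) → Fin d → ℝ, (∀ i, x i ∈ K i) → 0 < orientDet d x) ∨
            (∀ x : Fin (d + 1) → Fin d → ℝ, (∀ i, x i ∈ K i) → orientDet d x < 0)) :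
    ¬ ∃ (a : Fin d → ℝ) (c₀ : ℝ), a ≠ 0 ∧
        ∀ i, ∃ p ∈ K i, ∑ k, a k * p k = c₀ := by
  rintro ⟨a, c₀, ha, hmeet⟩
  choose p hp hpc using hmeet
  have hdet : orientDet d p = 0 := by
    rw [orientDet, ← Matrix.exists_vecMul_eq_zero_iff]
    refine ⟨Fin.cons (-c₀) a, ?_, ?_⟩
    · intro h
      apply ha
      funext k
      have := congrFun h k.succ
      simpa using this
    · funext j
      have := hpc j
      simp [Matrix.vecMul, dotProduct, Fin.sum_univ_succ]
      linarith
  rcases hsep with h | h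
  · exact absurd hdet (ne_of_gt (h p hp))
  · exact absurd hdet (ne_of_lt (h p hp))
end

section
/- Let Δ_1, ..., Δ_{d+1} be compact convex sets in R^d, each the convex hull of a finite point set, such that the union of all their vertex sets consists of distinct points. If some hyperplane intersects all of Δ_1, ..., Δ_{d+1}, then there exists a hyperplane intersecting all of Δ_1, ..., Δ_{d+1} that contains at least d of the vertices from ∪_{i=1}^{d+1} V(Δ_i), where V(Δ_i) is the vertex set of Δ_i. -/
open Finset
open scoped Classical

section Stmt15Aux

def dotp {d : ℕ} (a p : Fin d → ℝ) : ℝ := ∑ k, a k * p k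

lemma dotp_line {d : ℕ} (a b p : Fin d → ℝ) (t : ℝ) :
    dotp (fun k => a k + t * b k) p = dotp a p + t * dotp b p := by
  simp [dotp, add_mul, Finset.sum_add_distrib, Finset.mul_sum, mul_assoc]

lemma dotp_neg_left {d : ℕ} (a p : Fin d → ℝ) :
    dotp (fun k => -a k) p = -dotp a p := by
  simp [dotp]

lemma dotp_self_pos {d : ℕ} (a : Fin d → ℝ) (ha : a ≠ 0) : 0 < dotp a a := by
  obtain ⟨k, hk⟩ := Function.ne_iff.mp ha
  exact Finset.sum_pos' (fun i _ => mul_self_nonneg _)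
    ⟨k, Finset.mem_univ k, mul_self_pos.mpr hk⟩

lemma isLinearMap_dotp {d : ℕ} (a : Fin d → ℝ) :
    IsLinearMap ℝ (fun p : Fin d → ℝ => dotp a p) := by
  constructor
  · intro x y; simp [dotp, mul_add, Finset.sum_add_distrib]
  · intro c x; simp [dotp, Finset.mul_sum, Pi.smul_apply, smul_eq_mul]; ring_nf
    simp [mul_comm, mul_left_comm]

lemma hull_iff {d : ℕ} (V : Finset (Fin d → ℝ)) (a : Fin d → ℝ) (c : ℝ) :
    (∃ p ∈ convexHull ℝ (V : Set (Fin d → ℝ)), dotp a p = c) ↔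
    ((∃ p ∈ V, dotp a p ≤ c) ∧ (∃ q ∈ V, c ≤ dotp a q)) := by
  constructor
  · rintro ⟨p, hp, hpc⟩
    constructor
    · by_contra h
      push_neg at h
      have hsub : convexHull ℝ (V : Set (Fin d → ℝ)) ⊆ {x | c < dotp a x} := by
        apply convexHull_min _ (convex_halfSpace_gt (isLinearMap_dotp a) c)
        intro v hv; exact h v (by exact_mod_cast hv)
      exact absurd hpc (ne_of_gt (hsub hp))
    · by_contra h
      push_neg at h
      have hsub : convexHull ℝ (V : Set (Fin d → ℝ)) ⊆ {x | dotp a x < c} := by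
        apply convexHull_min _ (convex_halfSpace_lt (isLinearMap_dotp a) c)
        intro v hv; exact h v (by exact_mod_cast hv)
      exact absurd hpc (ne_of_lt (hsub hp))
  · rintro ⟨⟨p, hp, hpc⟩, ⟨q, hq, hqc⟩⟩
    have hpm : p ∈ convexHull ℝ (V : Set (Fin d → ℝ)) :=
      subset_convexHull ℝ _ (by exact_mod_cast hp)
    have hqm : q ∈ convexHull ℝ (V : Set (Fin d → ℝ)) :=
      subset_convexHull ℝ _ (by exact_mod_cast hq)
    rcases eq_or_lt_of_le hpc with h | h
    · exact ⟨p, hpm, h⟩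
    rcases eq_or_lt_of_le hqc with h' | h'
    · exact ⟨q, hqm, h'.symm⟩
    set α := dotp a p
    set β := dotp a q
    set t : ℝ := (c - α) / (β - α) with ht
    have hβα : 0 < β - α := by linarith
    have ht0 : 0 ≤ t := le_of_lt (div_pos (by linarith) hβα)
    have ht1 : t ≤ 1 := by rw [div_le_one hβα]; linarith
    refine ⟨(1 - t) • p + t • q, ?_, ?_⟩
    · exact (convex_convexHull ℝ _) hpm hqm (by linarith) ht0 (by ring)
    · have hlin := isLinearMap_dotp a
      have heq : dotp a ((1 - t) • p + t • q) = (1 - t) * α + t * β := by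
        rw [hlin.map_add, hlin.map_smul, hlin.map_smul]; rfl
      rw [heq]
      have htv : t * (β - α) = c - α := div_mul_cancel₀ _ (ne_of_gt hβα)
      ring_nf
      ring_nf at htv
      linarith

lemma step_aux {d : ℕ} (U : Finset (Fin d → ℝ)) (a b : Fin d → ℝ) (c e : ℝ)
    (hb : ∀ t : ℝ, (fun k => a k + t * b k) ≠ 0)
    (hP : ∀ p ∈ U, dotp a p = c → dotp b p = e)
    (q₀ : Fin d → ℝ) (hq₀U : q₀ ∈ U) (hq₀b : dotp b q₀ ≠ e)
    (hq₀pos : 0 < (c - dotp a q₀) / (dotp b q₀ - e)) :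
    ∃ (a' : Fin d → ℝ) (c' : ℝ), a' ≠ 0 ∧
      (U.filter fun p => dotp a p = c).card < (U.filter fun p => dotp a' p = c').card ∧
      (∀ p ∈ U, dotp a p ≤ c → dotp a' p ≤ c') ∧
      (∀ p ∈ U, c ≤ dotp a p → c' ≤ dotp a' p) := by
  set C : Finset (Fin d → ℝ) :=
    U.filter (fun q => dotp b q ≠ e ∧ 0 < (c - dotp a q) / (dotp b q - e)) with hC
  have hCne : C.Nonempty := ⟨q₀, by simp [hC, hq₀U, hq₀b, hq₀pos]⟩
  obtain ⟨qs, hqsC, hmin⟩ :=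
    C.exists_min_image (fun q => (c - dotp a q) / (dotp b q - e)) hCne
  rw [hC, Finset.mem_filter] at hqsC
  obtain ⟨hqsU, hqsb, hqspos⟩ := hqsC
  set t : ℝ := (c - dotp a qs) / (dotp b qs - e) with htdef
  have ht : 0 < t := hqspos
  have hden : dotp b qs - e ≠ 0 := sub_ne_zero.mpr hqsb
  set a' : Fin d → ℝ := fun k => a k + t * b k with ha'
  set c' : ℝ := c + t * e with hc'
  have key : ∀ p, dotp a' p = dotp a p + t * dotp b p := fun p => dotp_line a b p t
  have fact1 : ∀ p ∈ U, dotp a p = c → dotp a' p = c' := by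
    intro p hp hpc
    rw [key, hpc, hP p hp hpc]
  have hqs_eq : dotp a' qs = c' := by
    have h1 : t * (dotp b qs - e) = c - dotp a qs := div_mul_cancel₀ _ hden
    rw [key]
    have : t * dotp b qs - t * e = c - dotp a qs := by rw [← h1]; ring
    simp only [hc']; linarith
  have hqs_ne : dotp a qs ≠ c := fun h => hqsb (hP qs hqsU h)
  refine ⟨a', c', hb t, ?_, ?_, ?_⟩
  · apply Finset.card_lt_card
    rw [Finset.ssubset_iff_of_subset]
    · exact ⟨qs, Finset.mem_filter.mpr ⟨hqsU, hqs_eq⟩, by simp [hqs_ne]⟩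
    · intro p hp
      rw [Finset.mem_filter] at hp ⊢
      exact ⟨hp.1, fact1 p hp.1 hp.2⟩
  · intro p hpU hple
    rw [key]
    rcases le_or_gt (dotp b p) e with hD | hD
    · nlinarith
    · have hlt : dotp a p < c := by
        rcases lt_or_eq_of_le hple with h | h
        · exact h
        · exact absurd (hP p hpU h) (by linarith)
      have hpC : p ∈ C := by
        rw [hC, Finset.mem_filter]
        exact ⟨hpU, by linarith, div_pos (by linarith) (by linarith)⟩
      have := hmin p hpC
      rw [le_div_iff₀ (by linarith : (0:ℝ) < dotp b p - e)] at this
      simp only [hc']; nlinarith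
  · intro p hpU hpge
    rw [key]
    rcases le_or_gt e (dotp b p) with hD | hD
    · nlinarith
    · have hgt : c < dotp a p := by
        rcases lt_or_eq_of_le hpge with h | h
        · exact h
        · exact absurd (hP p hpU h.symm) (by linarith)
      have hpC : p ∈ C := by
        rw [hC, Finset.mem_filter]
        refine ⟨hpU, by linarith, ?_⟩
        exact div_pos_of_neg_of_neg (by linarith) (by linarith)
      have := hmin p hpC
      rw [le_div_iff_of_neg (by linarith : dotp b p - e < 0)] at this
      simp only [hc']; nlinarith

lemma exists_dir {d : ℕ} (P : Finset (Fin d → ℝ)) (a : Fin d → ℝ) (hP : P.card < d) :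
    ∃ (b : Fin d → ℝ) (e : ℝ), ¬(b = 0 ∧ e = 0) ∧ (∀ p ∈ P, dotp b p = e) ∧ dotp a b = 0 := by
  let f : ((Fin d → ℝ) × ℝ) →ₗ[ℝ] ((↥P → ℝ) × ℝ) :=
    { toFun := fun z => (fun p => dotp z.1 ↑p - z.2, dotp a z.1)
      map_add' := by
        intro x y
        ext p
        · simp [dotp, add_mul, Finset.sum_add_distrib]; ring
        · simp [dotp, mul_add, Finset.sum_add_distrib]
      map_smul' := by
        intro r x
        ext p
        · simp [dotp, Finset.mul_sum, mul_assoc, mul_sub]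
        · simp only [dotp, Prod.smul_fst, Prod.smul_snd, Pi.smul_apply, smul_eq_mul,
            RingHom.id_apply, Finset.mul_sum]
          exact Finset.sum_congr rfl (fun k _ => by ring) }
  have hnotinj : ¬ Function.Injective f := by
    intro hinj
    have h1 := LinearMap.finrank_le_finrank_of_injective hinj
    have h2 : Module.finrank ℝ ((Fin d → ℝ) × ℝ) = d + 1 := by
      simp [Module.finrank_prod]
    have h3 : Module.finrank ℝ ((↥P → ℝ) × ℝ) = P.card + 1 := by
      simp [Module.finrank_prod, Module.finrank_pi, Fintype.card_coe]
    omega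
  rw [Function.not_injective_iff] at hnotinj
  obtain ⟨x, y, hxy, hne⟩ := hnotinj
  refine ⟨x.1 - y.1, x.2 - y.2, ?_, ?_, ?_⟩
  · rintro ⟨h1, h2⟩
    apply hne
    have : x.1 = y.1 := by rwa [sub_eq_zero] at h1
    have h2' : x.2 = y.2 := by rwa [sub_eq_zero] at h2
    exact Prod.ext this h2'
  · intro p hp
    have := congrFun (congrArg Prod.fst hxy) ⟨p, hp⟩
    simp only [f, LinearMap.coe_mk, AddHom.coe_mk] at this
    have hd : dotp (x.1 - y.1) p = dotp x.1 p - dotp y.1 p := by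
      simp [dotp, sub_mul, Finset.sum_sub_distrib]
    rw [hd]; linarith
  · have := congrArg Prod.snd hxy
    simp only [f, LinearMap.coe_mk, AddHom.coe_mk] at this
    have hd : dotp a (x.1 - y.1) = dotp a x.1 - dotp a y.1 := by
      simp [dotp, mul_sub, Finset.sum_sub_distrib]
    rw [hd]; linarith

lemma step {d : ℕ} (U : Finset (Fin d → ℝ)) (hU : d + 1 ≤ U.card)
    (hgen : ∀ (a : Fin d → ℝ) (c₀ : ℝ), a ≠ 0 →
      (U.filter (fun p => dotp a p = c₀)).card ≤ d)
    (a : Fin d → ℝ) (c : ℝ) (ha : a ≠ 0)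
    (hk : (U.filter (fun p => dotp a p = c)).card < d) :
    ∃ (a' : Fin d → ℝ) (c' : ℝ), a' ≠ 0 ∧
      (U.filter fun p => dotp a p = c).card < (U.filter fun p => dotp a' p = c').card ∧
      (∀ p ∈ U, dotp a p ≤ c → dotp a' p ≤ c') ∧
      (∀ p ∈ U, c ≤ dotp a p → c' ≤ dotp a' p) := by
  set P : Finset (Fin d → ℝ) := U.filter (fun p => dotp a p = c) with hPdef
  obtain ⟨b, e, hbe, hPb, hab⟩ := exists_dir P a hk
  -- every incident point of U is in P, hence satisfies dotp b p = e
  have hP : ∀ p ∈ U, dotp a p = c → dotp b p = e := by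
    intro p hp hpc
    exact hPb p (Finset.mem_filter.mpr ⟨hp, hpc⟩)
  -- a + t b never vanishes
  have hb : ∀ t : ℝ, (fun k => a k + t * b k) ≠ 0 := by
    intro t h
    by_cases hb0 : b = 0
    · apply ha
      funext k
      have := congrFun h k
      simp [hb0] at this
      exact this
    · have h1 : dotp (fun k => a k + t * b k) b = 0 := by
        rw [h]; simp [dotp]
      rw [dotp_line] at h1
      rw [hab] at h1
      have hbb : 0 < dotp b b := dotp_self_pos b hb0
      have ht0 : t = 0 := by
        rcases mul_eq_zero.mp (by linarith : t * dotp b b = 0) with h' | h'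
        · exact h'
        · exact absurd h' (ne_of_gt hbb)
      apply ha
      funext k
      have := congrFun h k
      simp [ht0] at this
      exact this
  -- find q₀ ∈ U with dotp b q₀ ≠ e
  have hq₀ : ∃ q₀ ∈ U, dotp b q₀ ≠ e := by
    by_cases hb0 : b = 0
    · have he : e ≠ 0 := fun h0 => hbe ⟨hb0, h0⟩
      obtain ⟨q, hq⟩ := Finset.card_pos.mp (by omega : 0 < U.card)
      exact ⟨q, hq, by simp [hb0, dotp]; exact fun h => he h.symm⟩
    · by_contra h
      push_neg at h
      have : U.filter (fun p => dotp b p = e) = U := Finset.filter_true_of_mem h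
      have hcard := hgen b e hb0
      rw [this] at hcard
      omega
  obtain ⟨q₀, hq₀U, hq₀b⟩ := hq₀
  have hq₀a : dotp a q₀ ≠ c := fun h => hq₀b (hP q₀ hq₀U h)
  have hnum : c - dotp a q₀ ≠ 0 := sub_ne_zero.mpr (Ne.symm hq₀a)
  have hden : dotp b q₀ - e ≠ 0 := sub_ne_zero.mpr hq₀b
  rcases lt_or_gt_of_ne (div_ne_zero hnum hden :
      (c - dotp a q₀) / (dotp b q₀ - e) ≠ 0) with hneg | hpos
  · -- use direction (-b, -e)
    have hb' : ∀ t : ℝ, (fun k => a k + t * (-b k)) ≠ 0 := by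
      intro t h
      apply hb (-t)
      funext k
      have := congrFun h k
      simpa [neg_mul, mul_neg] using this
    have hP' : ∀ p ∈ U, dotp a p = c → dotp (fun k => -b k) p = -e := by
      intro p hp hpc
      rw [dotp_neg_left, hP p hp hpc]
    have hq₀b' : dotp (fun k => -b k) q₀ ≠ -e := by
      rw [dotp_neg_left]; exact fun h => hq₀b (by linarith [neg_injective h])
    have hpos' : 0 < (c - dotp a q₀) / (dotp (fun k => -b k) q₀ - -e) := by
      rw [dotp_neg_left]
      have : -dotp b q₀ - -e = -(dotp b q₀ - e) := by ring
      rw [this, div_neg]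
      linarith
    exact step_aux U a (fun k => -b k) c (-e) hb' hP' q₀ hq₀U hq₀b' hpos'
  · exact step_aux U a b c e hb hP q₀ hq₀U hq₀b hpos

end Stmt15Aux

/-- let `Δ_i = conv(V i)` for finite vertex sets `V 1, ..., V (d+1)`
in `ℝ^d` whose union consists of distinct points in general position (no `d+1`
of them on a common hyperplane). If some hyperplane meets every `Δ_i`, then
there is a hyperplane meeting every `Δ_i` that contains at least `d` of the
vertices of `⋃ i, V i`. -/
theorem stmt15 (d : ℕ) (hd : 0 < d) (V : Fin (d + 1) → Finset (Fin d → ℝ))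
    (hVne : ∀ i, (V i).Nonempty)
    (hdisj : ∀ i j, i ≠ j → Disjoint (V i) (V j))
    (hgen : ∀ (a : Fin d → ℝ) (c₀ : ℝ), a ≠ 0 →
      ((Finset.univ.biUnion V).filter (fun p => ∑ k, a k * p k = c₀)).card ≤ d)
    (hcross : ∃ (a : Fin d → ℝ) (c₀ : ℝ), a ≠ 0 ∧
      ∀ i, ∃ p ∈ convexHull ℝ (V i : Set (Fin d → ℝ)), ∑ k, a k * p k = c₀) :
    ∃ (a : Fin d → ℝ) (c₀ : ℝ), a ≠ 0 ∧
      (∀ i, ∃ p ∈ convexHull ℝ (V i : Set (Fin d → ℝ)), ∑ k, a k * p k = c₀) ∧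
      d ≤ ((Finset.univ.biUnion V).filter (fun p => ∑ k, a k * p k = c₀)).card := by
  set U : Finset (Fin d → ℝ) := Finset.univ.biUnion V with hUdef
  have hgen' : ∀ (a : Fin d → ℝ) (c₀ : ℝ), a ≠ 0 →
      (U.filter (fun p => dotp a p = c₀)).card ≤ d := hgen
  have hVU : ∀ i, V i ⊆ U := fun i => Finset.subset_biUnion_of_mem V (Finset.mem_univ i)
  have hUcard : d + 1 ≤ U.card := by
    rw [hUdef, Finset.card_biUnion (fun i _ j _ hij => hdisj i j hij)]
    calc d + 1 = ∑ _i : Fin (d + 1), 1 := by simp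
    _ ≤ ∑ i, (V i).card := Finset.sum_le_sum (fun i _ => Finset.card_pos.mpr (hVne i))
  obtain ⟨a₀, c₀, ha₀, hmeet₀⟩ := hcross
  -- convert convexHull conditions to witness conditions
  have hT₀ : ∀ i, (∃ p ∈ V i, dotp a₀ p ≤ c₀) ∧ (∃ q ∈ V i, c₀ ≤ dotp a₀ q) :=
    fun i => (hull_iff (V i) a₀ c₀).mp (hmeet₀ i)
  -- iterate the step
  have main : ∀ n : ℕ, ∀ (a : Fin d → ℝ) (c : ℝ), a ≠ 0 →
      (∀ i, (∃ p ∈ V i, dotp a p ≤ c) ∧ (∃ q ∈ V i, c ≤ dotp a q)) →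
      U.card ≤ n + (U.filter (fun p => dotp a p = c)).card →
      ∃ (a' : Fin d → ℝ) (c' : ℝ), a' ≠ 0 ∧
        (∀ i, (∃ p ∈ V i, dotp a' p ≤ c') ∧ (∃ q ∈ V i, c' ≤ dotp a' q)) ∧
        d ≤ (U.filter (fun p => dotp a' p = c')).card := by
    intro n
    induction n with
    | zero =>
      intro a c ha hT hb
      refine ⟨a, c, ha, hT, ?_⟩
      have := Finset.card_filter_le U (fun p => dotp a p = c)
      omega
    | succ n ih =>
      intro a c ha hT hb
      by_cases hk : d ≤ (U.filter (fun p => dotp a p = c)).card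
      · exact ⟨a, c, ha, hT, hk⟩
      · push_neg at hk
        obtain ⟨a', c', ha', hcard, hle, hge⟩ := step U hUcard hgen' a c ha hk
        refine ih a' c' ha' ?_ ?_
        · intro i
          obtain ⟨⟨p, hp, hpc⟩, ⟨q, hq, hqc⟩⟩ := hT i
          exact ⟨⟨p, hp, hle p (hVU i hp) hpc⟩, ⟨q, hq, hge q (hVU i hq) hqc⟩⟩
        · omega
  obtain ⟨a', c', ha', hT', hcard'⟩ :=
    main U.card a₀ c₀ ha₀ hT₀ (by omega)
  refine ⟨a', c', ha', fun i => (hull_iff (V i) a' c').mpr (hT' i), hcard'⟩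
end

section
/- Let Δ_1, ..., Δ_{d+1} be nonempty compact convex sets in R^d, let x ∈ conv(Δ_1 ∪ ... ∪ Δ_{d+1}), and suppose there exist points y'_1 ∈ Δ_1, ..., y'_{d+1} ∈ Δ_{d+1} with x ∉ conv{y'_1,...,y'_{d+1}}. Then there exist points z_1 ∈ Δ_1, ..., z_{d+1} ∈ Δ_{d+1} such that x lies on the boundary of conv{z_1, ..., z_{d+1}}; in particular, if additionally every (d+1)-tuple from Δ_1 × ... × Δ_{d+1} is affinely independent, there is a hyperplane through x intersecting at least d of the sets Δ_i. -/
/-!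
Grouping the points of a convex combination for `x` by colour gives a colourful tuple `y` whose
simplex contains `x`. The tuples `p` with `x ∈ conv (range p)` form a closed set, which is a
neighbourhood of `p` as soon as `x` is interior to `conv (range p)`: a hyperplane separating `x`
from a nearby simplex would, after a small shift, cut a ball around `x` out of `conv (range p)`.
Hence on the connected set `Δ_1 × ⋯ × Δ_{d+1}`, which contains `y` and `y'`, some tuple `z` lies
on the frontier of that set, and then `x` lies on the boundary of `conv (range z)`. When `z` is an
affine basis, a barycentric coordinate of `x` vanishes, and its zero set is a hyperplane through
`x` and the `d` other vertices.
-/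

open Set Finset
open scoped Classical

theorem Convex.exists_mem_sum_smul_eq {E κ : Type*} [AddCommGroup E] [Module ℝ E] {s : Set E}
    (hs : Convex ℝ s) (hne : s.Nonempty) (t : Finset κ) {w : κ → ℝ} {p : κ → E}
    (hw : ∀ j ∈ t, 0 ≤ w j) (hp : ∀ j ∈ t, p j ∈ s) :
    ∃ q ∈ s, (∑ j ∈ t, w j) • q = ∑ j ∈ t, w j • p j := by
  by_cases h : ∑ j ∈ t, w j = 0
  · have hw0 : ∀ j ∈ t, w j = 0 := (Finset.sum_eq_zero_iff_of_nonneg hw).1 h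
    refine ⟨hne.some, hne.some_mem, ?_⟩
    rw [h, zero_smul]
    exact (Finset.sum_eq_zero fun j hj => by rw [hw0 j hj, zero_smul]).symm
  · have hpos : 0 < ∑ j ∈ t, w j := lt_of_le_of_ne (Finset.sum_nonneg hw) (Ne.symm h)
    refine ⟨t.centerMass w p, hs.centerMass_mem hw hpos hp, ?_⟩
    rw [Finset.centerMass, smul_smul, mul_inv_cancel₀ h, one_smul]

theorem exists_colorful_mem_convexHull {E ι : Type*} [AddCommGroup E] [Module ℝ E] [Fintype ι]
    {Δ : ι → Set E} (hne : ∀ i, (Δ i).Nonempty) (hcv : ∀ i, Convex ℝ (Δ i)) {x : E}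
    (hx : x ∈ convexHull ℝ (⋃ i, Δ i)) :
    ∃ y : ι → E, (∀ i, y i ∈ Δ i) ∧ x ∈ convexHull ℝ (range y) := by
  obtain ⟨κ, _, w, p, hw₀, hw₁, hp, rfl⟩ := mem_convexHull_iff_exists_fintype.1 hx
  choose c hc using fun j => mem_iUnion.1 (hp j)
  choose y hy hsum using fun i =>
    (hcv i).exists_mem_sum_smul_eq (hne i) {j | c j = i} (fun j _ => hw₀ j)
      (fun j hj => (Finset.mem_filter.1 hj).2 ▸ hc j)
  refine ⟨y, hy, mem_convexHull_of_exists_fintype _ y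
    (fun i => Finset.sum_nonneg fun j (_ : j ∈ ({j | c j = i} : Finset κ)) => hw₀ j)
    ?_ mem_range_self ?_⟩
  · exact (Finset.sum_fiberwise _ c _).trans hw₁
  · simp only [hsum]
    exact Finset.sum_fiberwise _ c _

section Normed

variable {E : Type*} [NormedAddCommGroup E] [NormedSpace ℝ E]

theorem StrongDual.apply_add_mul_norm_le_of_closedBall_subset {f : StrongDual ℝ E} {S : Set E}
    {x : E} {ε c : ℝ} (hε : 0 < ε) (hS : Metric.closedBall x ε ⊆ S) (hf : ∀ y ∈ S, f y ≤ c) :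
    f x + ε * ‖f‖ ≤ c := by
  have hbound : ∀ z ∈ Metric.closedBall (0 : E) ε, ‖f z‖ ≤ c - f x := by
    intro z hz
    have hz' : ‖z‖ ≤ ε := by simpa using hz
    have h₁ := hf _ (hS (by simpa [dist_eq_norm] using hz' : x + z ∈ Metric.closedBall x ε))
    have h₂ := hf _ (hS (by simpa [dist_eq_norm] using hz' : x - z ∈ Metric.closedBall x ε))
    rw [map_add] at h₁
    rw [map_sub] at h₂
    rw [Real.norm_eq_abs, abs_le]
    constructor <;> linarith
  have := ContinuousLinearMap.opNorm_bound_of_ball_bound hε _ f hbound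
  rw [le_div_iff₀ hε] at this
  linarith

variable {ι : Type*} [Fintype ι]

theorem isClosed_setOf_mem_convexHull_range (x : E) :
    IsClosed {p : ι → E | x ∈ convexHull ℝ (range p)} := by
  refine isOpen_compl_iff.1 (isOpen_iff_mem_nhds.2 fun p hp => ?_)
  obtain ⟨f, u, hfp, hfx⟩ := geometric_hahn_banach_closed_point (convex_convexHull ℝ _)
    ((finite_range p).isClosed_convexHull ℝ) hp
  have hnear : ∀ᶠ q in nhds p, ∀ i, f (q i) < u := Filter.eventually_all.2 fun i =>
    ((f.continuous.comp (continuous_apply i)).continuousAt (x := p) |>.eventually (gt_mem_nhds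
      (hfp _ (subset_convexHull ℝ _ (mem_range_self i)))))
  filter_upwards [hnear] with q hq hxq
  have hsub : convexHull ℝ (range q) ⊆ {y | f y < u} :=
    convexHull_min (range_subset_iff.2 hq) (convex_halfSpace_lt f.toLinearMap.isLinear u)
  exact (hsub hxq).not_gt hfx

theorem setOf_mem_convexHull_range_mem_nhds {x : E} {p : ι → E}
    (hx : x ∈ interior (convexHull ℝ (range p))) :
    {q : ι → E | x ∈ convexHull ℝ (range q)} ∈ nhds p := by
  obtain ⟨ε, hε, hball⟩ :=
    Metric.nhds_basis_closedBall.mem_iff.1 (mem_interior_iff_mem_nhds.1 hx)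
  filter_upwards [Metric.closedBall_mem_nhds p hε] with q hq
  by_contra hxq
  obtain ⟨f, u, hfq, hfx⟩ := geometric_hahn_banach_closed_point (convex_convexHull ℝ _)
    ((finite_range q).isClosed_convexHull ℝ) hxq
  have hfp : ∀ i, f (p i) ≤ u + ε * ‖f‖ := fun i => by
    have hdist : ‖p i - q i‖ ≤ ε := by
      rw [← dist_eq_norm, dist_comm]; exact (dist_le_pi_dist q p i).trans hq
    have := (le_abs_self _).trans ((f.le_opNorm (p i - q i)).trans
      (mul_le_mul_of_nonneg_left hdist (norm_nonneg f)))
    rw [map_sub] at this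
    linarith [hfq _ (subset_convexHull ℝ _ (mem_range_self i))]
  have := StrongDual.apply_add_mul_norm_le_of_closedBall_subset hε hball fun y hy =>
    (convexHull_min (range_subset_iff.2 hfp) (convex_halfSpace_le f.toLinearMap.isLinear _) hy :)
  linarith

theorem exists_mem_frontier_convexHull_range {S : Set (ι → E)} (hS : IsPreconnected S) {x : E}
    {y y' : ι → E} (hy : y ∈ S) (hxy : x ∈ convexHull ℝ (range y)) (hy' : y' ∈ S)
    (hxy' : x ∉ convexHull ℝ (range y')) :
    ∃ z ∈ S, x ∈ frontier (convexHull ℝ (range z)) := by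
  set A := {p : ι → E | x ∈ convexHull ℝ (range p)}
  obtain ⟨z, hzS, hzA, hzA'⟩ := isPreconnected_closed_iff.1 hS A (interior A)ᶜ
    (isClosed_setOf_mem_convexHull_range x) isOpen_interior.isClosed_compl
    (fun p _ => (em (p ∈ interior A)).imp (fun h => interior_subset h) id)
    ⟨y, hy, hxy⟩ ⟨y', hy', fun h => hxy' (interior_subset (s := A) h)⟩
  refine ⟨z, hzS, ?_⟩
  rw [frontier, ((finite_range z).isClosed_convexHull ℝ).closure_eq]
  exact ⟨hzA, fun hint =>
    hzA' (mem_interior_iff_mem_nhds.2 (setOf_mem_convexHull_range_mem_nhds hint))⟩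

end Normed

theorem AffineBasis.exists_coord_eq_zero_of_mem_frontier {ι E : Type*} [Finite ι]
    [NormedAddCommGroup E] [NormedSpace ℝ E] (b : AffineBasis ι ℝ E) {x : E}
    (hx : x ∈ frontier (convexHull ℝ (range b))) : ∃ i, b.coord i x = 0 := by
  rw [frontier, ((finite_range b).isClosed_convexHull ℝ).closure_eq, b.interior_convexHull,
    b.convexHull_eq_nonneg_coord] at hx
  obtain ⟨hnonneg, hnotpos⟩ := hx
  simp only [mem_ofPred_eq, not_forall, not_lt] at hnotpos
  obtain ⟨i, hi⟩ := hnotpos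
  exact ⟨i, le_antisymm hi (hnonneg i)⟩

theorem AffineMap.sum_linear_single_mul {κ : Type*} [Fintype κ] (f : (κ → ℝ) →ᵃ[ℝ] ℝ)
    (p : κ → ℝ) : ∑ k, f.linear (Pi.single k 1) * p k = f p - f 0 := by
  have hlin : f p - f 0 = f.linear p := by simpa using (f.linearMap_vsub p 0).symm
  rw [hlin]
  conv_rhs => rw [← Finset.univ_sum_single p, map_sum]
  refine Finset.sum_congr rfl fun k _ => ?_
  rw [mul_comm, ← smul_eq_mul, ← map_smul, ← Pi.single_smul, smul_eq_mul, mul_one]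

theorem AffineBasis.exists_hyperplane_of_mem_frontier {ι κ : Type*} [Finite ι] [Fintype κ]
    (b : AffineBasis ι ℝ (κ → ℝ)) {x : κ → ℝ} (hx : x ∈ frontier (convexHull ℝ (range b))) :
    ∃ (a : κ → ℝ) (c : ℝ) (i₀ : ι),
      a ≠ 0 ∧ ∑ k, a k * x k = c ∧ ∀ j ≠ i₀, ∑ k, a k * b j k = c := by
  obtain ⟨i₀, hi₀⟩ := b.exists_coord_eq_zero_of_mem_frontier hx
  set f := b.coord i₀
  have hsum := f.sum_linear_single_mul
  refine ⟨fun k => f.linear (Pi.single k 1), -f 0, i₀, fun ha => ?_, ?_, fun j hj => ?_⟩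
  · have h₁ := hsum (b i₀)
    have h₂ := hsum x
    simp only [funext_iff, Pi.zero_apply] at ha
    simp only [ha, zero_mul, Finset.sum_const_zero] at h₁ h₂
    rw [b.coord_apply_eq] at h₁
    linarith
  · rw [hsum, hi₀, zero_sub]
  · rw [hsum, b.coord_apply_ne hj.symm, zero_sub]

theorem stmt16_general (d : ℕ) (Δ : Fin (d + 1) → Set (Fin d → ℝ))
    (hcv : ∀ i, Convex ℝ (Δ i))
    (x : Fin d → ℝ) (hx : x ∈ convexHull ℝ (⋃ i, Δ i))
    (y' : Fin (d + 1) → Fin d → ℝ) (hy' : ∀ i, y' i ∈ Δ i)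
    (hout : x ∉ convexHull ℝ (Set.range y')) :
    (∃ z : Fin (d + 1) → Fin d → ℝ, (∀ i, z i ∈ Δ i) ∧
      x ∈ frontier (convexHull ℝ (Set.range z))) ∧
    ((∀ z : Fin (d + 1) → Fin d → ℝ, (∀ i, z i ∈ Δ i) → AffineIndependent ℝ z) →
      ∃ (a : Fin d → ℝ) (c₀ : ℝ), a ≠ 0 ∧ (∑ k, a k * x k = c₀) ∧
        d ≤ (Finset.univ.filter
          (fun i : Fin (d + 1) => ∃ p ∈ Δ i, ∑ k, a k * p k = c₀)).card) := by
  obtain ⟨y, hy, hxy⟩ := exists_colorful_mem_convexHull (fun i => ⟨y' i, hy' i⟩) hcv hx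
  obtain ⟨z, hz, hxz⟩ := exists_mem_frontier_convexHull_range
    (convex_pi fun i _ => hcv i).isPreconnected (mem_univ_pi.2 hy) hxy (mem_univ_pi.2 hy') hout
  rw [mem_univ_pi] at hz
  refine ⟨⟨z, hz, hxz⟩, fun haff => ?_⟩
  let b : AffineBasis (Fin (d + 1)) ℝ (Fin d → ℝ) :=
    ⟨z, haff z hz, (haff z hz).affineSpan_eq_top_iff_card_eq_finrank_add_one.2 (by simp)⟩
  obtain ⟨a, c, i₀, ha, hax, hbc⟩ := b.exists_hyperplane_of_mem_frontier hxz
  refine ⟨a, c, ha, hax, ?_⟩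
  calc d = #(univ.erase i₀) := by simp
    _ ≤ _ := Finset.card_le_card fun j hj =>
      Finset.mem_filter.2 ⟨mem_univ j, z j, hz j, hbc j (ne_of_mem_erase hj)⟩

/-- if `x ∈ conv(Δ_1 ∪ ... ∪ Δ_{d+1})` for nonempty compact convex
sets `Δ_i`, and some colorful tuple `y'` has `x ∉ conv{y'_1, ..., y'_{d+1}}`,
then some colorful tuple `z` has `x` on the boundary of `conv{z_1, ..., z_{d+1}}`;
in particular, if every colorful tuple is affinely independent, there is a
hyperplane through `x` intersecting at least `d` of the sets `Δ_i`. -/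
theorem stmt16 (d : ℕ) (Δ : Fin (d + 1) → Set (Fin d → ℝ))
    (hne : ∀ i, (Δ i).Nonempty) (hcp : ∀ i, IsCompact (Δ i))
    (hcv : ∀ i, Convex ℝ (Δ i))
    (x : Fin d → ℝ) (hx : x ∈ convexHull ℝ (⋃ i, Δ i))
    (y' : Fin (d + 1) → Fin d → ℝ) (hy' : ∀ i, y' i ∈ Δ i)
    (hout : x ∉ convexHull ℝ (Set.range y')) :
    (∃ z : Fin (d + 1) → Fin d → ℝ, (∀ i, z i ∈ Δ i) ∧
      x ∈ frontier (convexHull ℝ (Set.range z))) ∧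
    ((∀ z : Fin (d + 1) → Fin d → ℝ, (∀ i, z i ∈ Δ i) → AffineIndependent ℝ z) →
      ∃ (a : Fin d → ℝ) (c₀ : ℝ), a ≠ 0 ∧ (∑ k, a k * x k = c₀) ∧
        d ≤ (Finset.univ.filter
          (fun i : Fin (d + 1) => ∃ p ∈ Δ i, ∑ k, a k * p k = c₀)).card) :=
  stmt16_general d Δ hcv x hx y' hy' hout
end
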